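/- Let f ∈ S be a nonzero homogeneous polynomial of degree d ≥ 1. For every η ∈ Ω^n_d such that f divides every coefficient of df ∧ η, there exists η′ ∈ Ω^n_d with df ∧ η′ = 0 and f·dη − df ∧ η = f·dη′. Consequently, the ℂ-subspace { f·dη − df ∧ η : η ∈ Ω^n_d, f divides df ∧ η } of Ω^{n+1}_{2d} equals f·{ dη′ : η′ ∈ Ω^n_d, df ∧ η′ = 0 }. -/

import Mathlib

open scoped TensorProduct

set_option synthInstance.maxHeartbeats 1000000
set_option maxHeartbeats 2000000

noncomputable section

/-- The graded polynomial ring `S = ℂ[x_0,…,x_n]`. -/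
abbrev SP (n : ℕ) := MvPolynomial (Fin (n + 1)) ℂ

/-- The exterior algebra over `ℂ` on the span of `dx_0,…,dx_n`. -/
abbrev Lam (n : ℕ) := ExteriorAlgebra ℂ (Fin (n + 1) → ℂ)

/-- The algebra `Ω` of polynomial differential forms on `ℂ^{n+1}`. -/
abbrev Om (n : ℕ) := SP n ⊗[ℂ] Lam n


/-- Helper instance. -/
instance omSubAddCommGroup (n : ℕ) (A : Submodule ℂ (Om n)) : AddCommGroup ↥A :=
  inferInstance

/-- The basic one-form `dx_i` (the exterior algebra part). -/
def lamdx (n : ℕ) (i : Fin (n + 1)) : Lam n :=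
  ExteriorAlgebra.ι ℂ (Pi.single i 1)

/-- `dx_0 ∧ dx_1 ∧ … ∧ dx_n`, i.e. `ω'_n` (exterior algebra part). -/
def topLam (n : ℕ) : Lam n :=
  (List.ofFn fun i : Fin (n + 1) => lamdx n i).prod

/-- `dx_0 ∧ … ∧ dx_{i-1} ∧ dx_{i+1} ∧ … ∧ dx_n` (exterior algebra part). -/
def omitLam (n : ℕ) (i : Fin (n + 1)) : Lam n :=
  (List.ofFn fun j : Fin n => lamdx n (i.succAbove j)).prod

/-- The one-form `df = Σ_i (∂f/∂x_i)·dx_i`. -/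
def oneForm (n : ℕ) (f : SP n) : Om n :=
  ∑ i, (MvPolynomial.pderiv i f) ⊗ₜ[ℂ] lamdx n i

/-- The exterior derivative `d : Ω → Ω` (as a `ℂ`-linear map), sending
`a·dx_{i_1}∧…∧dx_{i_j}` to `Σ_i (∂a/∂x_i)·dx_i∧dx_{i_1}∧…∧dx_{i_j}`. -/
def extd (n : ℕ) : Om n →ₗ[ℂ] Om n :=
  ∑ i : Fin (n + 1),
    TensorProduct.map (MvPolynomial.pderiv i).toLinearMap
      (LinearMap.mulLeft ℂ (lamdx n i))

/-- The `ℂ`-linear map `r ↦ ω(r) = Σ_i (−1)^i·r_i·dx_0∧…∧\hat{dx_i}∧…∧dx_n`. -/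
def omegaR (n : ℕ) : (Fin (n + 1) → SP n) →ₗ[ℂ] Om n :=
  ∑ i : Fin (n + 1), ((-1 : ℂ) ^ (i : ℕ)) •
    (((TensorProduct.mk ℂ (SP n) (Lam n)).flip (omitLam n i)).comp
      (LinearMap.proj (R := ℂ) i))

/-- The Euler form `ω_n = Σ_i (−1)^i·x_i·dx_0∧…∧\hat{dx_i}∧…∧dx_n`. -/
def eulerForm (n : ℕ) : Om n :=
  omegaR n fun i => MvPolynomial.X i

/-- `S_q`, the homogeneous component of degree `q ∈ ℤ` of `S` (zero for `q < 0`). -/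
def Shom (n : ℕ) (q : ℤ) : Submodule ℂ (SP n) :=
  Submodule.span ℂ {a : SP n | ∃ m : ℕ, (m : ℤ) = q ∧ a.IsHomogeneous m}

/-- `Ω^j_q`: the span of the forms `a·dx_{i_1}∧…∧dx_{i_j}` with `i_1 < … < i_j`
and `a ∈ S_{q−j}`. -/
def OmegaComp (n : ℕ) (j q : ℤ) : Submodule ℂ (Om n) :=
  Submodule.span ℂ
    { w | ∃ (m : ℕ) (a : SP n) (s : Fin m → Fin (n + 1)),
        (m : ℤ) = j ∧ a ∈ Shom n (q - j) ∧ StrictMono s ∧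
        w = a ⊗ₜ[ℂ] (List.ofFn fun t => lamdx n (s t)).prod }

/-- `Ω^j`: the span of the forms `a·dx_{i_1}∧…∧dx_{i_j}` with `i_1 < … < i_j`. -/
def OmegaJ (n : ℕ) (j : ℕ) : Submodule ℂ (Om n) :=
  Submodule.span ℂ
    { w | ∃ (a : SP n) (s : Fin j → Fin (n + 1)), StrictMono s ∧
        w = a ⊗ₜ[ℂ] (List.ofFn fun t => lamdx n (s t)).prod }

/-!
Write `η = Σ (-1)^i a_i dx_0 ∧ … ∧ \hat{dx_i} ∧ … ∧ dx_n` with `a_i` homogeneous of degree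
`d - n`. Then `df ∧ η = g · dx_0 ∧ … ∧ dx_n` with `g = Σ ∂_i f · a_i`, and
`dη = (Σ ∂_i a_i) · dx_0 ∧ … ∧ dx_n`. Since `f ∣ g` and both are homogeneous, `g = f h` with
`h` homogeneous of degree `d - n - 1` (and `g = 0` if `d ≤ n`). Replacing `a_i` by
`a_i - h x_i / d` kills `g` by Euler's identity `Σ x_i ∂_i f = d f`, and lowers `Σ ∂_i a_i` by
exactly `h`, because `Σ ∂_i (h x_i) = (deg h + n + 1) h = d h`.
-/

namespace MvPolynomial

section Homogeneous

variable {σ R : Type*} [CommSemiring R] {f g : MvPolynomial σ R} {d k m : ℕ}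

attribute [local instance] gradedAlgebra in
lemma IsHomogeneous.homogeneousComponent_mul (hf : f.IsHomogeneous d) (u : MvPolynomial σ R)
    (m : ℕ) :
    homogeneousComponent m (f * u) = if d ≤ m then f * homogeneousComponent (m - d) u else 0 := by
  simp_rw [← decomposition.decompose'_apply]
  exact DirectSum.coe_decompose_mul_of_left_mem _ m ((mem_homogeneousSubmodule d f).mpr hf)

lemma IsHomogeneous.eq_zero_of_dvd_of_lt (hf : f.IsHomogeneous d) (hg : g.IsHomogeneous m)
    (hfg : f ∣ g) (hm : m < d) : g = 0 := by
  obtain ⟨u, rfl⟩ := hfg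
  rw [← homogeneousComponent_eq_self hg, hf.homogeneousComponent_mul, if_neg hm.not_ge]

lemma IsHomogeneous.exists_isHomogeneous_eq_mul_of_dvd (hf : f.IsHomogeneous d)
    (hg : g.IsHomogeneous (d + k)) (hfg : f ∣ g) : ∃ h, h.IsHomogeneous k ∧ g = f * h := by
  obtain ⟨u, rfl⟩ := hfg
  refine ⟨homogeneousComponent k u, homogeneousComponent_isHomogeneous k u, ?_⟩
  rw [← homogeneousComponent_eq_self hg, hf.homogeneousComponent_mul,
    if_pos (Nat.le_add_right d k), Nat.add_sub_cancel_left]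

end Homogeneous

section Euler

variable {σ K : Type*} [Fintype σ] [Field K] {f h : MvPolynomial σ K} {d k : ℕ}

lemma IsHomogeneous.sum_pderiv_mul_sub_smul_mul_X (hf : f.IsHomogeneous d) (hd : (d : K) ≠ 0)
    (a : σ → MvPolynomial σ K) (h : MvPolynomial σ K) :
    ∑ i, pderiv i f * (a i - (d : K)⁻¹ • (h * X i)) = ∑ i, pderiv i f * a i - f * h := by
  have hX : ∑ i, pderiv i f * (h * X i) = (d : K) • (f * h) := by
    calc ∑ i, pderiv i f * (h * X i) = h * ∑ i, X i * pderiv i f := by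
          rw [Finset.mul_sum]; exact Finset.sum_congr rfl fun i _ => by ring
      _ = (d : K) • (f * h) := by
          rw [hf.sum_X_mul_pderiv, ← Nat.cast_smul_eq_nsmul K, mul_smul_comm, mul_comm]
  simp only [mul_sub, Finset.sum_sub_distrib, mul_smul_comm, ← Finset.smul_sum, hX, smul_smul,
    inv_mul_cancel₀ hd, one_smul]

lemma IsHomogeneous.sum_pderiv_sub_smul_mul_X (hh : h.IsHomogeneous k)
    (hkd : k + Fintype.card σ = d) (hd : (d : K) ≠ 0) (a : σ → MvPolynomial σ K) :
    ∑ i, pderiv i (a i - (d : K)⁻¹ • (h * X i)) = ∑ i, pderiv i (a i) - h := by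
  have hX : ∑ i, pderiv i (h * X i) = (d : K) • h := by
    simp only [Derivation.leibniz, pderiv_X_self, smul_eq_mul, mul_one, Finset.sum_add_distrib,
      hh.sum_X_mul_pderiv, Finset.sum_const, Finset.card_univ, ← add_smul, ← hkd,
      ← Nat.cast_smul_eq_nsmul K, Nat.cast_add, add_comm (Fintype.card σ : K)]
  simp only [map_sub, Finset.sum_sub_distrib, Derivation.map_smul, ← Finset.smul_sum, hX, smul_smul,
    inv_mul_cancel₀ hd, one_smul]

end Euler

end MvPolynomial

namespace Fin

lemma exists_succAbove_eq_of_strictMono {n : ℕ} {s : Fin n → Fin (n + 1)} (hs : StrictMono s) :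
    ∃ i : Fin (n + 1), s = i.succAbove := by
  obtain ⟨i, hi⟩ : ∃ i, i ∉ Set.range s := by
    by_contra! h
    simpa using Fintype.card_le_of_surjective s fun i => h i
  refine ⟨i, (hs.range_inj (strictMono_succAbove i)).mp ?_⟩
  refine Set.eq_of_subset_of_ncard_le ?_ ?_ (Set.toFinite _)
  · rw [range_succAbove]
    rintro _ ⟨t, rfl⟩ rfl
    exact hi ⟨t, rfl⟩
  · rw [← Set.image_univ, ← Set.image_univ, Set.ncard_image_of_injective _ hs.injective,
      Set.ncard_image_of_injective _ (strictMono_succAbove i).injective]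

end Fin

open MvPolynomial ExteriorAlgebra TensorProduct

section Forms

variable {n : ℕ}

lemma topLam_eq_ιMulti : topLam n = ιMulti ℂ (n + 1) (fun i => Pi.single i 1) :=
  (ιMulti_apply _).symm

lemma omitLam_eq_ιMulti (j : Fin (n + 1)) :
    omitLam n j = ιMulti ℂ n (fun t => Pi.single (j.succAbove t) 1) :=
  (ιMulti_apply _).symm

lemma lamdx_mul_omitLam (i j : Fin (n + 1)) :
    lamdx n i * omitLam n j = if i = j then ((-1 : ℂ) ^ (i : ℕ)) • topLam n else 0 := by
  have hcons : lamdx n i * omitLam n j = ιMulti ℂ (n + 1)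
      (Fin.cons (Pi.single i 1) fun t => Pi.single (j.succAbove t) 1) := by
    rw [ιMulti_succ_apply, omitLam_eq_ιMulti]
    rfl
  rw [hcons]
  split_ifs with hij
  · subst hij
    -- `dx_i, dx_0, …, \hat{dx_i}, …, dx_n` is `dx_0, …, dx_n` permuted by a cycle of length `i + 1`
    have hperm : (Fin.cons (Pi.single i 1) fun t => Pi.single (i.succAbove t) 1 :
        Fin (n + 1) → Fin (n + 1) → ℂ) =
        (fun k => Pi.single k 1) ∘ (i.cycleRange.symm : Equiv.Perm (Fin (n + 1))) := by
      funext t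
      induction t using Fin.cases <;> simp
    rw [hperm, AlternatingMap.map_perm, Equiv.Perm.sign_symm, Fin.sign_cycleRange,
      ← topLam_eq_ιMulti, Units.smul_def, ← Int.cast_smul_eq_zsmul ℂ]
    push_cast
    rfl
  · obtain ⟨t, ht⟩ := Fin.exists_succAbove_eq hij
    exact AlternatingMap.map_eq_zero_of_eq _ _ (by simp [ht]) (Fin.succ_ne_zero t).symm

lemma omegaR_apply (b : Fin (n + 1) → SP n) :
    omegaR n b = ∑ i : Fin (n + 1), ((-1 : ℂ) ^ (i : ℕ)) • (b i ⊗ₜ[ℂ] omitLam n i) := by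
  simp [omegaR, LinearMap.sum_apply]

lemma oneForm_mul_omegaR (f : SP n) (b : Fin (n + 1) → SP n) :
    oneForm n f * omegaR n b = (∑ i, pderiv i f * b i) ⊗ₜ[ℂ] topLam n := by
  simp only [oneForm, omegaR_apply, Finset.sum_mul_sum, mul_smul_comm,
    Algebra.TensorProduct.tmul_mul_tmul, lamdx_mul_omitLam, tmul_ite, smul_ite,
    smul_zero, Finset.sum_ite_eq, Finset.mem_univ, if_true, tmul_smul, smul_smul, ← mul_pow,
    neg_mul_neg, one_mul, one_pow, one_smul, sum_tmul]

lemma extd_omegaR (b : Fin (n + 1) → SP n) :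
    extd n (omegaR n b) = (∑ i, pderiv i (b i)) ⊗ₜ[ℂ] topLam n := by
  simp only [extd, omegaR_apply, map_sum, map_smul, LinearMap.sum_apply, map_tmul,
    Derivation.coeFn_coe, LinearMap.mulLeft_apply, lamdx_mul_omitLam, tmul_ite,
    Finset.sum_ite_eq', Finset.mem_univ, if_true, tmul_smul, smul_smul, ← mul_pow, neg_mul_neg,
    one_mul, one_pow, one_smul, sum_tmul]

end Forms

section TopCoefficient

variable {n : ℕ}

def topDet (n : ℕ) : Lam n →ₗ[ℂ] ℂ :=
  liftAlternating fun k => if h : k = n + 1 then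
    (Matrix.detRowAlternating (R := ℂ) (n := Fin (n + 1))).domDomCongr (finCongr h.symm) else 0

lemma topDet_topLam : topDet n (topLam n) = 1 := by
  rw [topLam_eq_ιMulti, topDet, liftAlternating_apply_ιMulti, dif_pos rfl, finCongr_refl,
    AlternatingMap.domDomCongr_refl]
  have hone : (fun i => Pi.single i 1 : Fin (n + 1) → Fin (n + 1) → ℂ) =
      (1 : Matrix (Fin (n + 1)) (Fin (n + 1)) ℂ) := by
    ext i j
    simp [Matrix.one_apply, Pi.single_apply, eq_comm]
  rw [hone]
  exact Matrix.det_one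

def topCoeff (n : ℕ) : Om n →ₗ[ℂ] SP n :=
  (TensorProduct.rid ℂ (SP n)).toLinearMap ∘ₗ (topDet n).lTensor (SP n)

lemma topCoeff_tmul (a : SP n) (m : Lam n) : topCoeff n (a ⊗ₜ[ℂ] m) = topDet n m • a := by
  simp [topCoeff]

lemma topCoeff_tmul_one_mul (f : SP n) (ξ : Om n) :
    topCoeff n ((f ⊗ₜ[ℂ] (1 : Lam n)) * ξ) = f * topCoeff n ξ := by
  induction ξ using TensorProduct.induction_on with
  | zero => simp
  | tmul a m =>
    rw [Algebra.TensorProduct.tmul_mul_tmul, one_mul, topCoeff_tmul, topCoeff_tmul, mul_smul_comm]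
  | add x y hx hy => rw [mul_add, map_add, hx, hy, map_add, mul_add]

lemma dvd_of_tmul_topLam_eq_mul {f g : SP n} {ξ : Om n}
    (h : g ⊗ₜ[ℂ] topLam n = (f ⊗ₜ[ℂ] (1 : Lam n)) * ξ) : f ∣ g :=
  ⟨topCoeff n ξ, by
    simpa [topCoeff_tmul, topDet_topLam, topCoeff_tmul_one_mul] using congrArg (topCoeff n) h⟩

end TopCoefficient

section Components

variable {n : ℕ}

lemma isHomogeneous_toNat_of_mem_Shom {q : ℤ} {a : SP n} (ha : a ∈ Shom n q) :
    a.IsHomogeneous q.toNat := by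
  refine (mem_homogeneousSubmodule _ _).mp (Submodule.span_le.mpr ?_ ha)
  rintro b ⟨m, rfl, hb⟩
  simpa using hb

lemma omegaR_single (i : Fin (n + 1)) (c : SP n) :
    omegaR n (Pi.single i c) = ((-1 : ℂ) ^ (i : ℕ)) • (c ⊗ₜ[ℂ] omitLam n i) := by
  rw [omegaR_apply, Finset.sum_eq_single i (fun j _ hj => by simp [hj]) (by simp),
    Pi.single_eq_same]

lemma exists_omegaR_eq_of_mem_OmegaComp {d : ℕ} {η : Om n} (hη : η ∈ OmegaComp n n d) :
    ∃ a : Fin (n + 1) → SP n, (∀ i, (a i).IsHomogeneous (d - n)) ∧ η = omegaR n a := by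
  induction hη using Submodule.span_induction with
  | mem w hw =>
    obtain ⟨m, c, s, hm, hc, hs, rfl⟩ := hw
    obtain rfl : m = n := by exact_mod_cast hm
    obtain ⟨i, rfl⟩ := Fin.exists_succAbove_eq_of_strictMono hs
    refine ⟨Pi.single i (((-1 : ℂ) ^ (i : ℕ)) • c), fun j => ?_, ?_⟩
    · rcases eq_or_ne j i with rfl | hji
      · rw [Pi.single_eq_same, smul_eq_C_mul, ← Int.toNat_sub]
        exact (isHomogeneous_toNat_of_mem_Shom hc).C_mul _
      · rw [Pi.single_eq_of_ne hji]
        exact isHomogeneous_zero _ _ _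
    · rw [omegaR_single, ← smul_tmul', smul_smul, ← mul_pow, neg_mul_neg, one_mul, one_pow,
        one_smul]
      rfl
  | zero => exact ⟨0, fun _ => isHomogeneous_zero _ _ _, (map_zero _).symm⟩
  | add x y _ _ hx hy =>
    obtain ⟨a, ha, rfl⟩ := hx
    obtain ⟨b, hb, rfl⟩ := hy
    exact ⟨a + b, fun i => (ha i).add (hb i), (map_add _ _ _).symm⟩
  | smul c x _ hx =>
    obtain ⟨a, ha, rfl⟩ := hx
    exact ⟨c • a, fun i => by simpa [smul_eq_C_mul] using (ha i).C_mul c, (map_smul _ _ _).symm⟩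

lemma omegaR_mem_OmegaComp {d : ℕ} (hnd : n ≤ d) {a : Fin (n + 1) → SP n}
    (ha : ∀ i, (a i).IsHomogeneous (d - n)) : omegaR n a ∈ OmegaComp n n d := by
  rw [omegaR_apply]
  refine Submodule.sum_mem _ fun i _ => Submodule.smul_mem _ _ (Submodule.subset_span ?_)
  exact ⟨n, a i, i.succAbove, rfl, Submodule.subset_span ⟨d - n, by omega, ha i⟩,
    Fin.strictMono_succAbove i, rfl⟩

end Components

lemma exists_closed_form_of_dvd {n d : ℕ} (hd : 1 ≤ d) {f : SP n} (hf : f.IsHomogeneous d)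
    {η : Om n} (hη : η ∈ OmegaComp n n d)
    (hdvd : ∃ ξ : Om n, oneForm n f * η = (f ⊗ₜ[ℂ] (1 : Lam n)) * ξ) :
    ∃ η' ∈ OmegaComp n n d, oneForm n f * η' = 0 ∧
      (f ⊗ₜ[ℂ] (1 : Lam n)) * extd n η - oneForm n f * η =
        (f ⊗ₜ[ℂ] (1 : Lam n)) * extd n η' := by
  obtain ⟨ξ, hξ⟩ := hdvd
  obtain ⟨a, ha, rfl⟩ := exists_omegaR_eq_of_mem_OmegaComp hη
  rw [oneForm_mul_omegaR] at hξ ⊢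
  have hfg := dvd_of_tmul_topLam_eq_mul hξ
  have hg : (∑ i, pderiv i f * a i).IsHomogeneous (d - 1 + (d - n)) :=
    IsHomogeneous.sum _ _ _ fun i _ => hf.pderiv.mul (ha i)
  rcases le_or_gt d n with hdn | hnd
  · -- `df ∧ η` has degree less than `deg f`, so it vanishes
    have hg0 := hf.eq_zero_of_dvd_of_lt hg hfg (by omega)
    exact ⟨omegaR n a, hη, by rw [oneForm_mul_omegaR, hg0, zero_tmul], by
      rw [hg0, zero_tmul, sub_zero]⟩
  · obtain ⟨h, hh, hgh⟩ := hf.exists_isHomogeneous_eq_mul_of_dvd (k := d - n - 1)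
      (by convert hg using 1; omega) hfg
    have hd0 : (d : ℂ) ≠ 0 := by exact_mod_cast (by omega : d ≠ 0)
    refine ⟨omegaR n fun i => a i - (d : ℂ)⁻¹ • (h * X i), omegaR_mem_OmegaComp hnd.le fun i => ?_,
      ?_, ?_⟩
    · refine (ha i).sub ?_
      rw [smul_eq_C_mul, show d - n = d - n - 1 + 1 by omega]
      exact (hh.mul (isHomogeneous_X ℂ i)).C_mul _
    · rw [oneForm_mul_omegaR, hf.sum_pderiv_mul_sub_smul_mul_X hd0, hgh, sub_self, zero_tmul]
    · rw [extd_omegaR, extd_omegaR, Algebra.TensorProduct.tmul_mul_tmul,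
        Algebra.TensorProduct.tmul_mul_tmul, one_mul, ← sub_tmul,
        hh.sum_pderiv_sub_smul_mul_X (by rw [Fintype.card_fin]; omega) hd0, hgh, mul_sub]

theorem stmt7_general (n : ℕ) (d : ℕ) (hd : 1 ≤ d) (f : SP n) (hf : f.IsHomogeneous d) :
    (∀ η ∈ OmegaComp n n d,
      (∃ ξ : Om n, oneForm n f * η = (f ⊗ₜ[ℂ] (1 : Lam n)) * ξ) →
      ∃ η' ∈ OmegaComp n n d, oneForm n f * η' = 0 ∧
        (f ⊗ₜ[ℂ] (1 : Lam n)) * extd n η - oneForm n f * η =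
          (f ⊗ₜ[ℂ] (1 : Lam n)) * extd n η') ∧
    {w : Om n | ∃ η ∈ OmegaComp n n d,
        (∃ ξ : Om n, oneForm n f * η = (f ⊗ₜ[ℂ] (1 : Lam n)) * ξ) ∧
        w = (f ⊗ₜ[ℂ] (1 : Lam n)) * extd n η - oneForm n f * η} =
      (fun ξ : Om n => (f ⊗ₜ[ℂ] (1 : Lam n)) * ξ) ''
        {w : Om n | ∃ η' ∈ OmegaComp n n d,
          oneForm n f * η' = 0 ∧ w = extd n η'} := by
  refine ⟨fun η hη hdvd => exists_closed_form_of_dvd hd hf hη hdvd, ?_⟩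
  ext w
  constructor
  · rintro ⟨η, hη, hdvd, rfl⟩
    obtain ⟨η', hη', hclosed, heq⟩ := exists_closed_form_of_dvd hd hf hη hdvd
    exact ⟨extd n η', ⟨η', hη', hclosed, rfl⟩, heq.symm⟩
  · rintro ⟨_, ⟨η', hη', hclosed, rfl⟩, rfl⟩
    exact ⟨η', hη', ⟨0, by rw [hclosed, mul_zero]⟩, by rw [hclosed, sub_zero]⟩

/-- for `f` nonzero homogeneous of degree `d ≥ 1`: for every `η ∈ Ω^n_d`
with `f ∣ df ∧ η` (coefficientwise) there is `η′ ∈ Ω^n_d` with `df ∧ η′ = 0` and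
`f·dη − df ∧ η = f·dη′`; consequently
`{ f·dη − df ∧ η : η ∈ Ω^n_d, f ∣ df ∧ η } = f·{ dη′ : η′ ∈ Ω^n_d, df ∧ η′ = 0 }`. -/
theorem stmt7 (n : ℕ) (hn : 1 ≤ n) (d : ℕ) (hd : 1 ≤ d) (f : SP n) (hf0 : f ≠ 0)
    (hf : f.IsHomogeneous d) :
    (∀ η ∈ OmegaComp n n d,
      (∃ ξ : Om n, oneForm n f * η = (f ⊗ₜ[ℂ] (1 : Lam n)) * ξ) →
      ∃ η' ∈ OmegaComp n n d, oneForm n f * η' = 0 ∧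
        (f ⊗ₜ[ℂ] (1 : Lam n)) * extd n η - oneForm n f * η =
          (f ⊗ₜ[ℂ] (1 : Lam n)) * extd n η') ∧
    {w : Om n | ∃ η ∈ OmegaComp n n d,
        (∃ ξ : Om n, oneForm n f * η = (f ⊗ₜ[ℂ] (1 : Lam n)) * ξ) ∧
        w = (f ⊗ₜ[ℂ] (1 : Lam n)) * extd n η - oneForm n f * η} =
      (fun ξ : Om n => (f ⊗ₜ[ℂ] (1 : Lam n)) * ξ) ''
        {w : Om n | ∃ η' ∈ OmegaComp n n d,
          oneForm n f * η' = 0 ∧ w = extd n η'} :=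
  stmt7_general n d hd f hf

end
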